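/- With P⊥ the orthogonal complement projection of projection P onto range(B), and a ∉ range(B), the residual norm after augmenting by column a satisfies ‖(I − P_{new})y‖² = ‖(I − P)y‖² − (yᵀ P⊥ a)² / ‖P⊥ a‖², where P_{new} is the projection onto range([B a]). Hence the OLS selection rule argmin over a of the new residual norm equals argmax over a of |yᵀ P⊥ a| / ‖P⊥ a‖. -/

import Mathlib

/-!
Adjoining the column `a` to `B` enlarges `U = range B` to `U ⊔ span {a} = U ⊔ span {w}` with
`w = P⊥ a ⊥ U`. One Gram–Schmidt step then gives `P_new y = P y + (⟨y, w⟩ / ‖w‖²) w`, so the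
residual loses exactly its component `⟨y, w⟩² / ‖w‖²` along `w`. The residual is therefore
smallest for the column maximising this drop, i.e. its square root `|⟨y, w⟩| / ‖w‖`.
-/

open Matrix

/-- `P` is the orthogonal projection matrix onto the subspace `U`. -/
def IsProjOnto {n : ℕ} (P : Matrix (Fin n) (Fin n) ℝ)
    (U : Submodule ℝ (Fin n → ℝ)) : Prop :=
  P.IsSymm ∧ P * P = P ∧ LinearMap.range P.mulVecLin = U

theorem range_mulVecLin_of_lastCases {R : Type*} [CommSemiring R] {n i : ℕ}
    (B : Matrix (Fin n) (Fin i) R) (a : Fin n → R) :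
    LinearMap.range (Matrix.of fun r (c : Fin (i + 1)) =>
      Fin.lastCases (a r) (fun j => B r j) c).mulVecLin =
      LinearMap.range B.mulVecLin ⊔ R ∙ a := by
  rw [range_mulVecLin, range_mulVecLin, sup_comm, ← Submodule.span_insert]
  congr 1
  ext v
  rw [Set.mem_insert_iff, or_comm, Set.mem_range, Set.mem_range, Fin.exists_fin_succ']
  simp [col, funext_iff, eq_comm]

/-- Also for `w = 0`, where both sides vanish since `x / 0 = 0`. -/
theorem div_dotProduct_self_mul_dotProduct_self {n : ℕ} (v w : Fin n → ℝ) :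
    v ⬝ᵥ w / (w ⬝ᵥ w) * (w ⬝ᵥ w) = v ⬝ᵥ w :=
  div_mul_cancel_of_imp fun h => by rw [dotProduct_self_eq_zero.mp h, dotProduct_zero]

namespace IsProjOnto

variable {n : ℕ} {P Q : Matrix (Fin n) (Fin n) ℝ} {U : Submodule ℝ (Fin n → ℝ)}

theorem mulVec_mem (hP : IsProjOnto P U) (v : Fin n → ℝ) : P *ᵥ v ∈ U :=
  hP.2.2 ▸ ⟨v, rfl⟩

theorem mulVec_of_mem (hP : IsProjOnto P U) {u : Fin n → ℝ} (hu : u ∈ U) : P *ᵥ u = u := by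
  rw [← hP.2.2] at hu
  obtain ⟨v, rfl⟩ := hu
  rw [mulVecLin_apply, mulVec_mulVec, hP.2.1]

theorem mulVec_dotProduct (hP : IsProjOnto P U) (v w : Fin n → ℝ) :
    P *ᵥ v ⬝ᵥ w = v ⬝ᵥ P *ᵥ w := by
  rw [dotProduct_mulVec, ← vecMul_transpose, hP.1.eq]

theorem one_sub_mulVec_dotProduct_eq_zero (hP : IsProjOnto P U) (v : Fin n → ℝ)
    {u : Fin n → ℝ} (hu : u ∈ U) : (1 - P) *ᵥ v ⬝ᵥ u = 0 := by
  rw [sub_mulVec, one_mulVec, sub_dotProduct, hP.mulVec_dotProduct, hP.mulVec_of_mem hu, sub_self]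

theorem one_sub_mulVec_dotProduct_of_orthogonal (hP : IsProjOnto P U) (y : Fin n → ℝ)
    {w : Fin n → ℝ} (hw : ∀ u ∈ U, w ⬝ᵥ u = 0) : (1 - P) *ᵥ y ⬝ᵥ w = y ⬝ᵥ w := by
  rw [sub_mulVec, one_mulVec, sub_dotProduct, dotProduct_comm (P *ᵥ y), hw _ (hP.mulVec_mem y),
    sub_zero]

theorem mulVec_eq_zero (hP : IsProjOnto P U) {v : Fin n → ℝ} (hv : ∀ u ∈ U, v ⬝ᵥ u = 0) :
    P *ᵥ v = 0 := by
  rw [← dotProduct_self_eq_zero, hP.mulVec_dotProduct, mulVec_mulVec, hP.2.1]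
  exact hv _ (hP.mulVec_mem v)

theorem mulVec_eq_of_orthogonal (hP : IsProjOnto P U) {y q : Fin n → ℝ} (hq : q ∈ U)
    (horth : ∀ u ∈ U, (y - q) ⬝ᵥ u = 0) : P *ᵥ y = q := by
  rw [← sub_add_cancel y q, mulVec_add, hP.mulVec_eq_zero horth, hP.mulVec_of_mem hq, zero_add]

theorem sup_span_one_sub_mulVec (hP : IsProjOnto P U) (a : Fin n → ℝ) :
    U ⊔ ℝ ∙ ((1 - P) *ᵥ a) = U ⊔ ℝ ∙ a := by
  have hPa : P *ᵥ a ∈ U := hP.mulVec_mem a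
  rw [sub_mulVec, one_mulVec]
  apply le_antisymm <;>
    refine sup_le le_sup_left ((Submodule.span_singleton_le_iff_mem _ _).mpr ?_)
  · exact Submodule.sub_mem _ (Submodule.mem_sup_right (Submodule.mem_span_singleton_self a))
      (Submodule.mem_sup_left hPa)
  · simpa using Submodule.add_mem _
      (Submodule.mem_sup_right (Submodule.mem_span_singleton_self (a - P *ᵥ a)))
      (Submodule.mem_sup_left hPa)

theorem mulVec_of_sup_span (hP : IsProjOnto P U) {w : Fin n → ℝ}
    (hw : ∀ u ∈ U, w ⬝ᵥ u = 0) (hQ : IsProjOnto Q (U ⊔ ℝ ∙ w)) (y : Fin n → ℝ) :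
    Q *ᵥ y = P *ᵥ y + (y ⬝ᵥ w / (w ⬝ᵥ w)) • w := by
  refine hQ.mulVec_eq_of_orthogonal
    (Submodule.add_mem _ (Submodule.mem_sup_left (hP.mulVec_mem y))
      (Submodule.mem_sup_right (Submodule.smul_mem _ _ (Submodule.mem_span_singleton_self w)))) ?_
  rintro _ hu
  obtain ⟨x, hx, _, hz, rfl⟩ := Submodule.mem_sup.mp hu
  obtain ⟨t, rfl⟩ := Submodule.mem_span_singleton.mp hz
  have hr : y - (P *ᵥ y + (y ⬝ᵥ w / (w ⬝ᵥ w)) • w) =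
      (1 - P) *ᵥ y - (y ⬝ᵥ w / (w ⬝ᵥ w)) • w := by
    rw [sub_mulVec, one_mulVec, sub_add_eq_sub_sub]
  have hry : (1 - P) *ᵥ y ⬝ᵥ w = y ⬝ᵥ w := hP.one_sub_mulVec_dotProduct_of_orthogonal y hw
  rw [hr]
  simp only [dotProduct_add, sub_dotProduct, smul_dotProduct, dotProduct_smul, smul_eq_mul,
    hP.one_sub_mulVec_dotProduct_eq_zero y hx, hw x hx, hry]
  linear_combination -t * div_dotProduct_self_mul_dotProduct_self y w

theorem one_sub_mulVec_dotProduct_self_of_sup_span (hP : IsProjOnto P U) {w : Fin n → ℝ}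
    (hw : ∀ u ∈ U, w ⬝ᵥ u = 0) (hQ : IsProjOnto Q (U ⊔ ℝ ∙ w)) (y : Fin n → ℝ) :
    (1 - Q) *ᵥ y ⬝ᵥ (1 - Q) *ᵥ y =
      (1 - P) *ᵥ y ⬝ᵥ (1 - P) *ᵥ y - (y ⬝ᵥ w) ^ 2 / (w ⬝ᵥ w) := by
  have hQy : (1 - Q) *ᵥ y = (1 - P) *ᵥ y - (y ⬝ᵥ w / (w ⬝ᵥ w)) • w := by
    rw [sub_mulVec, one_mulVec, hP.mulVec_of_sup_span hw hQ, sub_mulVec, one_mulVec,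
      sub_add_eq_sub_sub]
  have hry : (1 - P) *ᵥ y ⬝ᵥ w = y ⬝ᵥ w := hP.one_sub_mulVec_dotProduct_of_orthogonal y hw
  rw [hQy]
  simp only [sub_dotProduct, dotProduct_sub, smul_dotProduct, dotProduct_smul, smul_eq_mul,
    dotProduct_comm w ((1 - P) *ᵥ y), hry]
  linear_combination (y ⬝ᵥ w / (w ⬝ᵥ w)) * div_dotProduct_self_mul_dotProduct_self y w

end IsProjOnto

theorem abs_div_sqrt_le_abs_div_sqrt_iff {x₁ x₂ d₁ d₂ : ℝ} (hd₁ : 0 ≤ d₁) :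
    |x₂| / √d₂ ≤ |x₁| / √d₁ ↔ x₂ ^ 2 / d₂ ≤ x₁ ^ 2 / d₁ := by
  rw [← Real.sqrt_sq_eq_abs, ← Real.sqrt_sq_eq_abs x₁, ← Real.sqrt_div (sq_nonneg _),
    ← Real.sqrt_div (sq_nonneg _), Real.sqrt_le_sqrt_iff (div_nonneg (sq_nonneg _) hd₁)]

theorem residual_update_and_selection_general {n i : ℕ} (B : Matrix (Fin n) (Fin i) ℝ)
    (y : Fin n → ℝ)
    (P : Matrix (Fin n) (Fin n) ℝ)
    (hP : IsProjOnto P (LinearMap.range B.mulVecLin)) :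
    (∀ (a : Fin n → ℝ), a ∉ LinearMap.range B.mulVecLin →
      ∀ Pnew : Matrix (Fin n) (Fin n) ℝ,
        IsProjOnto Pnew (LinearMap.range (Matrix.of fun r (c : Fin (i + 1)) =>
          Fin.lastCases (a r) (fun j => B r j) c).mulVecLin) →
        (1 - Pnew).mulVec y ⬝ᵥ (1 - Pnew).mulVec y =
          (1 - P).mulVec y ⬝ᵥ (1 - P).mulVec y -
            (y ⬝ᵥ (1 - P).mulVec a) ^ 2 /
              ((1 - P).mulVec a ⬝ᵥ (1 - P).mulVec a)) ∧
    (∀ (a₁ a₂ : Fin n → ℝ), a₁ ∉ LinearMap.range B.mulVecLin →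
      a₂ ∉ LinearMap.range B.mulVecLin →
      ∀ P₁ P₂ : Matrix (Fin n) (Fin n) ℝ,
        IsProjOnto P₁ (LinearMap.range (Matrix.of fun r (c : Fin (i + 1)) =>
          Fin.lastCases (a₁ r) (fun j => B r j) c).mulVecLin) →
        IsProjOnto P₂ (LinearMap.range (Matrix.of fun r (c : Fin (i + 1)) =>
          Fin.lastCases (a₂ r) (fun j => B r j) c).mulVecLin) →
        ((1 - P₁).mulVec y ⬝ᵥ (1 - P₁).mulVec y ≤
            (1 - P₂).mulVec y ⬝ᵥ (1 - P₂).mulVec y ↔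
          |y ⬝ᵥ (1 - P).mulVec a₂| /
              Real.sqrt ((1 - P).mulVec a₂ ⬝ᵥ (1 - P).mulVec a₂) ≤
            |y ⬝ᵥ (1 - P).mulVec a₁| /
              Real.sqrt ((1 - P).mulVec a₁ ⬝ᵥ (1 - P).mulVec a₁))) := by
  have residual (a : Fin n → ℝ) (Pnew : Matrix (Fin n) (Fin n) ℝ)
      (hPnew : IsProjOnto Pnew (LinearMap.range (Matrix.of fun r (c : Fin (i + 1)) =>
        Fin.lastCases (a r) (fun j => B r j) c).mulVecLin)) :
      (1 - Pnew) *ᵥ y ⬝ᵥ (1 - Pnew) *ᵥ y = (1 - P) *ᵥ y ⬝ᵥ (1 - P) *ᵥ y -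
        (y ⬝ᵥ (1 - P) *ᵥ a) ^ 2 / ((1 - P) *ᵥ a ⬝ᵥ (1 - P) *ᵥ a) := by
    rw [range_mulVecLin_of_lastCases, ← hP.sup_span_one_sub_mulVec] at hPnew
    exact hP.one_sub_mulVec_dotProduct_self_of_sup_span
      (fun _ hu => hP.one_sub_mulVec_dotProduct_eq_zero a hu) hPnew y
  refine ⟨fun a _ => residual a, fun a₁ a₂ _ _ P₁ P₂ hP₁ hP₂ => ?_⟩
  rw [residual a₁ P₁ hP₁, residual a₂ P₂ hP₂, sub_le_sub_iff_left]
  exact (abs_div_sqrt_le_abs_div_sqrt_iff (dotProduct_self_star_nonneg _)).symm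

/-- residual norm update after augmenting by a column, and the
equivalence of the OLS residual-minimization rule with maximizing
`|yᵀP⊥a| / ‖P⊥a‖`. -/
theorem residual_update_and_selection {n i : ℕ} (B : Matrix (Fin n) (Fin i) ℝ)
    (hB : LinearIndependent ℝ Bᵀ) (y : Fin n → ℝ)
    (P : Matrix (Fin n) (Fin n) ℝ)
    (hP : IsProjOnto P (LinearMap.range B.mulVecLin)) :
    (∀ (a : Fin n → ℝ), a ∉ LinearMap.range B.mulVecLin →
      ∀ Pnew : Matrix (Fin n) (Fin n) ℝ,
        IsProjOnto Pnew (LinearMap.range (Matrix.of fun r (c : Fin (i + 1)) =>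
          Fin.lastCases (a r) (fun j => B r j) c).mulVecLin) →
        (1 - Pnew).mulVec y ⬝ᵥ (1 - Pnew).mulVec y =
          (1 - P).mulVec y ⬝ᵥ (1 - P).mulVec y -
            (y ⬝ᵥ (1 - P).mulVec a) ^ 2 /
              ((1 - P).mulVec a ⬝ᵥ (1 - P).mulVec a)) ∧
    (∀ (a₁ a₂ : Fin n → ℝ), a₁ ∉ LinearMap.range B.mulVecLin →
      a₂ ∉ LinearMap.range B.mulVecLin →
      ∀ P₁ P₂ : Matrix (Fin n) (Fin n) ℝ,
        IsProjOnto P₁ (LinearMap.range (Matrix.of fun r (c : Fin (i + 1)) =>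
          Fin.lastCases (a₁ r) (fun j => B r j) c).mulVecLin) →
        IsProjOnto P₂ (LinearMap.range (Matrix.of fun r (c : Fin (i + 1)) =>
          Fin.lastCases (a₂ r) (fun j => B r j) c).mulVecLin) →
        ((1 - P₁).mulVec y ⬝ᵥ (1 - P₁).mulVec y ≤
            (1 - P₂).mulVec y ⬝ᵥ (1 - P₂).mulVec y ↔
          |y ⬝ᵥ (1 - P).mulVec a₂| /
              Real.sqrt ((1 - P).mulVec a₂ ⬝ᵥ (1 - P).mulVec a₂) ≤
            |y ⬝ᵥ (1 - P).mulVec a₁| /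
              Real.sqrt ((1 - P).mulVec a₁ ⬝ᵥ (1 - P).mulVec a₁))) :=
  residual_update_and_selection_general B y P hP
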